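/- arXiv:1201.1028 — 5 statements merged into one kernel-verified Lean document; each statement's English description precedes it below -/
import Mathlib

section
/- Let (Y,g) be an oriented Riemannian 3-manifold of constant sectional curvature κ. Then for any 1-form ω on Y, đ(L_g ω) = K_g(*dω), where L_g(ω)_{ij} = ∇_i ω_j + ∇_j ω_i, K_g(η) = L_g(η) − (2/3)(δη) g is the conformal Killing operator, * is the Hodge star from 2-forms to 1-forms, and đ is the Dirac-type operator (đh)_{ij} = Sym_{ij}(Σ_{k,l} ε_{ikl}(∇_k h_{lj} − ∇_l h_{kj})). -/
open scoped BigOperators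
open MeasureTheory

/-- Levi-Civita symbol on `Fin 3` (components of the volume form in an
oriented orthonormal frame), with `eps 0 1 2 = 1`. -/
noncomputable def eps : Fin 3 → Fin 3 → Fin 3 → ℝ := fun i j k =>
  if (i, j, k) = (0, 1, 2) ∨ (i, j, k) = (1, 2, 0) ∨ (i, j, k) = (2, 0, 1) then 1
  else if (i, j, k) = (2, 1, 0) ∨ (i, j, k) = (1, 0, 2) ∨ (i, j, k) = (0, 2, 1) then -1
  else 0

/-- Kronecker delta: the components of the metric in an orthonormal frame. -/
noncomputable def kd : Fin 3 → Fin 3 → ℝ := fun i j => if i = j then 1 else 0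

/-- The Dirac-type operator `đ`:  given `D k l j = ∇ₖ h_{lj}` (the covariant
derivative components of a symmetric 2-tensor `h`), this is
`(đh)_{ij} = Sym_{ij} ( Σ_{k,l} ε_{ikl} (∇ₖ h_{lj} − ∇ₗ h_{kj}) )`. -/
noncomputable def dslash (D : Fin 3 → Fin 3 → Fin 3 → ℝ) (i j : Fin 3) : ℝ :=
  (1/2) * ((∑ k, ∑ l, eps i k l * (D k l j - D l k j))
    + (∑ k, ∑ l, eps j k l * (D k l i - D l k i)))

/-- Components `∇_a (đh)_{ij}` of the covariant derivative of `đh`, given the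
second covariant derivative components `D2 a k l j = ∇_a ∇ₖ h_{lj}` of `h`. -/
noncomputable def dslashD (D2 : Fin 3 → Fin 3 → Fin 3 → Fin 3 → ℝ) (a i j : Fin 3) : ℝ :=
  (1/2) * ((∑ k, ∑ l, eps i k l * (D2 a k l j - D2 a l k j))
    + (∑ k, ∑ l, eps j k l * (D2 a k l i - D2 a l k i)))

/-!
Contracting `ε_{ikl}` with `∇ₖ(L_g ω)_{lj} − ∇ₗ(L_g ω)_{kj}` leaves `2 ε_{ikl} ∇ₖ∇ⱼω_l` up to
curvature terms, and commuting the two derivatives turns this into `2 ε_{ikl} ∇ⱼ∇ₖω_l`, the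
derivative of `*dω`.  On a space of constant curvature every curvature term produced this way is
a multiple of `Σₖ ε_{ikj} ω_k`, which is skew in `i, j` and so disappears under symmetrization.
The trace term vanishes for the same reason: `δ(*dω) = ε_{mkl} ∇ₘ∇ₖω_l` is half the contraction
of `ε` with a commutator, which the Ricci identity turns into traces of `ε`, all zero.
-/
lemma eps_swap_right (i k l : Fin 3) : eps i l k = -eps i k l := by
  fin_cases i <;> fin_cases k <;> fin_cases l <;> simp [eps]

lemma eps_cycle (i j k : Fin 3) : eps j k i = eps i j k := by
  fin_cases i <;> fin_cases j <;> fin_cases k <;> simp [eps]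

lemma eps_swap_outer (i k l : Fin 3) : eps l k i = -eps i k l := by
  rw [eps_cycle, eps_swap_right]

lemma eps_self_right (i k : Fin 3) : eps i k k = 0 := by
  fin_cases i <;> fin_cases k <;> simp [eps]

lemma eps_self_left (i k : Fin 3) : eps i k i = 0 := by
  fin_cases i <;> fin_cases k <;> simp [eps]

lemma kd_comm (i j : Fin 3) : kd i j = kd j i := by
  simp only [kd, eq_comm]

lemma sum_mul_kd (f : Fin 3 → ℝ) (j : Fin 3) : ∑ l, f l * kd l j = f j := by
  simp [kd]

lemma sum_eps_mul_swap (i : Fin 3) (T : Fin 3 → Fin 3 → ℝ) :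
    ∑ k, ∑ l, eps i k l * T l k = -∑ k, ∑ l, eps i k l * T k l := by
  rw [Finset.sum_comm, ← Finset.sum_neg_distrib]
  refine Finset.sum_congr rfl fun k _ => ?_
  rw [← Finset.sum_neg_distrib]
  refine Finset.sum_congr rfl fun l _ => ?_
  rw [eps_swap_right]; ring

lemma sum_eps_mul_kd_sub (i j : Fin 3) (v : Fin 3 → ℝ) :
    ∑ k, ∑ l, eps i k l * (kd l j * v k - kd k j * v l) = 2 * ∑ k, eps i k j * v k := by
  simp only [mul_sub, Finset.sum_sub_distrib]
  rw [sum_eps_mul_swap i fun k l => kd l j * v k]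
  simp only [← mul_assoc, ← Finset.sum_mul, sum_mul_kd]
  ring

lemma sum_eps_mul_kd_self (i : Fin 3) (T : Fin 3 → Fin 3 → ℝ) :
    ∑ k, ∑ l, eps i k l * (kd k l * T k l) = 0 := by
  simp [kd, eps_self_right]

section ConstantCurvature

def ConstCurvatureRicciIdentity (κ : ℝ) (ω : Fin 3 → ℝ) (D2 : Fin 3 → Fin 3 → Fin 3 → ℝ) : Prop :=
  ∀ a b c, D2 a b c - D2 b a c = -κ * (kd b c * ω a - kd a c * ω b)

variable {κ : ℝ} {ω : Fin 3 → ℝ} {D2 : Fin 3 → Fin 3 → Fin 3 → ℝ}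

lemma sum_eps_mul_commutator_inner
    (hcomm : ConstCurvatureRicciIdentity κ ω D2) (i j : Fin 3) :
    ∑ k, ∑ l, eps i k l * (D2 k l j - D2 l k j) = -(2 * κ) * ∑ k, eps i k j * ω k := by
  simp only [hcomm _ _ _, mul_left_comm _ (-κ), ← Finset.mul_sum, sum_eps_mul_kd_sub]
  ring

lemma sum_eps_mul_commutator_mixed
    (hcomm : ConstCurvatureRicciIdentity κ ω D2) (i j : Fin 3) :
    ∑ k, ∑ l, eps i k l * (D2 k j l - D2 j k l) = -κ * ∑ k, eps i k j * ω k := by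
  simp only [hcomm _ _ _, mul_left_comm _ (-κ), ← Finset.mul_sum, mul_sub, Finset.sum_sub_distrib]
  rw [sum_eps_mul_kd_self i fun _ _ => ω j]
  simp only [kd_comm j, ← mul_assoc, ← Finset.sum_mul, sum_mul_kd]
  ring

lemma sum_eps_mul_cyclic_eq_zero
    (hcomm : ConstCurvatureRicciIdentity κ ω D2) (i : Fin 3) :
    ∑ k, ∑ l, eps i k l * D2 k l i = 0 := by
  have h := sum_eps_mul_commutator_inner hcomm i i
  simp only [mul_sub, Finset.sum_sub_distrib, sum_eps_mul_swap i fun k l => D2 k l i,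
    eps_self_left, zero_mul, Finset.sum_const_zero, mul_zero] at h
  linarith

lemma sum_eps_full_contraction_eq_zero
    (hcomm : ConstCurvatureRicciIdentity κ ω D2) :
    ∑ m, ∑ k, ∑ l, eps m k l * D2 m k l = 0 := calc
  _ = ∑ l, ∑ m, ∑ k, eps l m k * D2 m k l := by
      rw [Finset.sum_congr rfl fun m _ => Finset.sum_comm, Finset.sum_comm]
      refine Finset.sum_congr rfl fun l _ => Finset.sum_congr rfl fun m _ =>
        Finset.sum_congr rfl fun k _ => by rw [eps_cycle]
  _ = 0 := by simp only [sum_eps_mul_cyclic_eq_zero hcomm, Finset.sum_const_zero]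

lemma sum_eps_mul_deriv_killing
    (hcomm : ConstCurvatureRicciIdentity κ ω D2) (i j : Fin 3) :
    ∑ k, ∑ l, eps i k l * (D2 k l j + D2 k j l - (D2 l k j + D2 l j k))
      = 2 * ∑ k, ∑ l, eps i k l * D2 j k l - 4 * κ * ∑ k, eps i k j * ω k := by
  have hleft := sum_eps_mul_commutator_inner hcomm i j
  have hmid := sum_eps_mul_commutator_mixed hcomm i j
  have hswap := sum_eps_mul_swap i fun k l => D2 k j l
  simp only [mul_sub, mul_add, Finset.sum_sub_distrib, Finset.sum_add_distrib] at hleft hmid ⊢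
  linear_combination hleft + 2 * hmid - hswap

end ConstantCurvature

/-- Components at a point in an oriented orthonormal frame: `D2 a b c = ∇_a ∇_b ω_c`, and
constant curvature `κ` enters only through the Ricci identity `hcomm`.  The left side is `đ`
applied to `(L_g ω)_{lj} = ∇_l ω_j + ∇_j ω_l`; the right side is the conformal Killing operator
applied to `(*dω)_i = Σ ε_{ikl} ∇ₖ ω_l`, whose divergence is the triple sum. -/
theorem statement4_general (κ : ℝ) (ω : Fin 3 → ℝ)
    (D2 : Fin 3 → Fin 3 → Fin 3 → ℝ)
    (hcomm : ∀ a b c, D2 a b c - D2 b a c = -κ * (kd b c * ω a - kd a c * ω b)) :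
    ∀ i j,
      dslash (fun k l j => D2 k l j + D2 k j l) i j
        = (∑ k, ∑ l, eps j k l * D2 i k l) + (∑ k, ∑ l, eps i k l * D2 j k l)
          - (2/3) * (∑ m, ∑ k, ∑ l, eps m k l * D2 m k l) * kd i j := by
  intro i j
  have hskew : ∑ k, eps j k i * ω k = -∑ k, eps i k j * ω k := by
    rw [← Finset.sum_neg_distrib]
    exact Finset.sum_congr rfl fun k _ => by rw [eps_swap_outer, neg_mul]
  simp only [dslash, sum_eps_mul_deriv_killing hcomm, hskew, sum_eps_full_contraction_eq_zero hcomm]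
  ring

/-- on an oriented 3-manifold of constant sectional curvature κ,
`đ(L_g ω) = K_g(*dω)` for every 1-form `ω`.  Components at a point in an
oriented orthonormal frame: `ω`, `Dω a b = ∇_a ω_b`, `D2 a b c = ∇_a ∇_b ω_c`;
constant curvature `κ` enters through the commutation rule
`∇_a∇_b ω_c − ∇_b∇_a ω_c = −κ(δ_{bc} ω_a − δ_{ac} ω_b)`.
The left side is `đ` applied to `(L_g ω)_{lj} = ∇_l ω_j + ∇_j ω_l`
(with `∇ₖ (L_g ω)_{lj} = D2 k l j + D2 k j l`); the right side is the
conformal Killing operator applied to `(*dω)_i = Σ ε_{ikl} ∇ₖ ω_l`. -/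
theorem statement4 (κ : ℝ) (ω : Fin 3 → ℝ)
    (Dω : Fin 3 → Fin 3 → ℝ) (D2 : Fin 3 → Fin 3 → Fin 3 → ℝ)
    (hcomm : ∀ a b c, D2 a b c - D2 b a c = -κ * (kd b c * ω a - kd a c * ω b)) :
    ∀ i j,
      dslash (fun k l j => D2 k l j + D2 k j l) i j
        = (∑ k, ∑ l, eps j k l * D2 i k l) + (∑ k, ∑ l, eps i k l * D2 j k l)
          - (2/3) * (∑ m, ∑ k, ∑ l, eps m k l * D2 m k l) * kd i j :=
  statement4_general κ ω D2 hcomm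
end

section
/- Let (Y,g) be an oriented Riemannian 3-manifold of constant sectional curvature κ. For any symmetric 2-tensor h: đ²h = −4 Δ_g tf(h) − 2 (∇² tr h)° + 3 K_g(δ_Y h) + 12 κ tf(h), where tf(h) = h − (1/3)(tr h) g, Δ_g is the rough (connection) Laplacian on symmetric 2-tensors, (∇²f)° is the trace-free Hessian, K_g is the conformal Killing operator K_g(η)_{ij} = ∇_i η_j + ∇_j η_i − (2/3)(∇^kη_k) g_{ij}, and (δ_Y h)_j = ∇^i h_{ij}. -/
open scoped BigOperators
open MeasureTheory

/-! At a point, in an oriented orthonormal frame, split `∇²h` into its part symmetric in the two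
differentiation indices and its antisymmetric part, which the Ricci identity expresses through `κ`
and `h`. `đ²h` and the derivative terms on the right are linear in `∇²h`. On the symmetric part
they agree (the flat Weitzenböck formula); on the curvature part they differ by `12κ tf(h)`. Each is a
finite identity among components, checked by expanding the `ε`-contractions. -/

noncomputable section

def dslashSq (D2 : Fin 3 → Fin 3 → Fin 3 → Fin 3 → ℝ) (i j : Fin 3) : ℝ :=
  dslash (dslashD D2) i j

/-- `−4 Δ tf(h) − 2 (∇² tr h)° + 3 K(δh)` written in terms of `D2 a k l j = ∇_a ∇_k h_{lj}`. -/
def flatWeitzenbock (D2 : Fin 3 → Fin 3 → Fin 3 → Fin 3 → ℝ) (i j : Fin 3) : ℝ :=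
  -4 * ((∑ a, D2 a a i j) - (1/3) * (∑ a, ∑ b, D2 a a b b) * kd i j)
    - 2 * ((∑ a, D2 i j a a) - (1/3) * (∑ c, ∑ a, D2 c c a a) * kd i j)
    + 3 * ((∑ a, D2 i a a j) + (∑ a, D2 j a a i)
        - (2/3) * (∑ k, ∑ a, D2 k a a k) * kd i j)

def traceFree (h : Fin 3 → Fin 3 → ℝ) (i j : Fin 3) : ℝ :=
  h i j - (1/3) * (∑ a, h a a) * kd i j

/-- On a space of constant curvature `κ` the Ricci identity reads
`∇_a ∇_b h_{cd} − ∇_b ∇_a h_{cd} = −κ · curvatureAction h a b c d`. -/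
def curvatureAction (h : Fin 3 → Fin 3 → ℝ) (a b c d : Fin 3) : ℝ :=
  kd b c * h a d - kd a c * h b d + kd b d * h c a - kd a d * h c b

end

section Linearity

variable (t : ℝ)

theorem dslash_add_smul (A B : Fin 3 → Fin 3 → Fin 3 → ℝ) (i j : Fin 3) :
    dslash (fun a b c => A a b c + t * B a b c) i j = dslash A i j + t * dslash B i j := by
  simp only [dslash, Fin.sum_univ_three]
  ring

theorem dslashD_add_smul (A B : Fin 3 → Fin 3 → Fin 3 → Fin 3 → ℝ) :
    dslashD (fun a b c d => A a b c d + t * B a b c d)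
      = fun a i j => dslashD A a i j + t * dslashD B a i j := by
  ext a i j
  simp only [dslashD, Fin.sum_univ_three]
  ring

theorem dslashSq_add_smul (A B : Fin 3 → Fin 3 → Fin 3 → Fin 3 → ℝ) (i j : Fin 3) :
    dslashSq (fun a b c d => A a b c d + t * B a b c d) i j
      = dslashSq A i j + t * dslashSq B i j := by
  rw [dslashSq, dslashD_add_smul, dslash_add_smul]
  rfl

theorem flatWeitzenbock_add_smul (A B : Fin 3 → Fin 3 → Fin 3 → Fin 3 → ℝ) (i j : Fin 3) :
    flatWeitzenbock (fun a b c d => A a b c d + t * B a b c d) i j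
      = flatWeitzenbock A i j + t * flatWeitzenbock B i j := by
  simp only [flatWeitzenbock, Fin.sum_univ_three]
  ring

end Linearity

theorem dslashSq_eq_flatWeitzenbock (S : Fin 3 → Fin 3 → Fin 3 → Fin 3 → ℝ)
    (hS₁₂ : ∀ a b c d, S a b c d = S b a c d) (hS₃₄ : ∀ a b c d, S a b c d = S a b d c)
    (i j : Fin 3) : dslashSq S i j = flatWeitzenbock S i j := by
  fin_cases i <;> fin_cases j <;>
  · simp only [dslashSq, dslash, dslashD, flatWeitzenbock, Fin.sum_univ_three, Fin.reduceFinMk]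
    norm_num [eps, kd, Fin.ext_iff]
    simp only [hS₁₂ 1 0, hS₁₂ 2 0, hS₁₂ 2 1, hS₃₄ _ _ 1 0, hS₃₄ _ _ 2 0, hS₃₄ _ _ 2 1]
    ring

theorem dslashSq_curvatureAction (h : Fin 3 → Fin 3 → ℝ) (hsym : ∀ i j, h i j = h j i)
    (i j : Fin 3) :
    dslashSq (curvatureAction h) i j
      = flatWeitzenbock (curvatureAction h) i j - 24 * traceFree h i j := by
  fin_cases i <;> fin_cases j <;>
  · simp only [dslashSq, dslash, dslashD, flatWeitzenbock, curvatureAction, traceFree,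
      Fin.sum_univ_three, Fin.reduceFinMk, hsym 1 0, hsym 2 0, hsym 2 1]
    norm_num [eps, kd, Fin.ext_iff]
    ring

theorem exists_symm_add_curvatureAction {κ : ℝ} {h : Fin 3 → Fin 3 → ℝ}
    {D2 : Fin 3 → Fin 3 → Fin 3 → Fin 3 → ℝ}
    (hD2sym : ∀ a k l j, D2 a k l j = D2 a k j l)
    (hcomm : ∀ a b c d, D2 a b c d - D2 b a c d = -κ * curvatureAction h a b c d) :
    ∃ S : Fin 3 → Fin 3 → Fin 3 → Fin 3 → ℝ,
      (∀ a b c d, S a b c d = S b a c d) ∧ (∀ a b c d, S a b c d = S a b d c) ∧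
      D2 = fun a b c d => S a b c d + (-κ / 2) * curvatureAction h a b c d := by
  refine ⟨fun a b c d => (D2 a b c d + D2 b a c d) / 2, fun a b c d => ?_, fun a b c d => ?_, ?_⟩
  · ring
  · dsimp only
    rw [hD2sym a b c d, hD2sym b a c d]
  · ext a b c d
    linear_combination hcomm a b c d / 2

theorem statement6_general (κ : ℝ) (h : Fin 3 → Fin 3 → ℝ)
    (D2 : Fin 3 → Fin 3 → Fin 3 → Fin 3 → ℝ)
    (hsym : ∀ i j, h i j = h j i)
    (hD2sym : ∀ a k l j, D2 a k l j = D2 a k j l)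
    (hcomm : ∀ a b c d, D2 a b c d - D2 b a c d
      = -κ * (kd b c * h a d - kd a c * h b d + kd b d * h c a - kd a d * h c b)) :
    ∀ i j,
      dslash (fun a b c => dslashD D2 a b c) i j
        = -4 * ((∑ a, D2 a a i j) - (1/3) * (∑ a, ∑ b, D2 a a b b) * kd i j)
          - 2 * ((∑ a, D2 i j a a) - (1/3) * (∑ c, ∑ a, D2 c c a a) * kd i j)
          + 3 * ((∑ a, D2 i a a j) + (∑ a, D2 j a a i)
              - (2/3) * (∑ k, ∑ a, D2 k a a k) * kd i j)
          + 12 * κ * (h i j - (1/3) * (∑ a, h a a) * kd i j) := by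
  intro i j
  change dslashSq D2 i j = flatWeitzenbock D2 i j + 12 * κ * traceFree h i j
  obtain ⟨S, hS₁₂, hS₃₄, rfl⟩ := exists_symm_add_curvatureAction hD2sym hcomm
  rw [dslashSq_add_smul, flatWeitzenbock_add_smul, dslashSq_eq_flatWeitzenbock S hS₁₂ hS₃₄,
    dslashSq_curvatureAction h hsym]
  ring

/-- on an oriented 3-manifold of constant sectional curvature κ,
`đ²h = −4 Δ_g tf(h) − 2 (∇² tr h)° + 3 K_g(δ_Y h) + 12 κ tf(h)`.
Components at a point in an oriented orthonormal frame: `h`,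
`D1 k l j = ∇ₖ h_{lj}`, `D2 a k l j = ∇_a ∇ₖ h_{lj}`. The left side is `đ`
applied to `đh` (whose covariant derivative components are `dslashD D2`);
on the right, `Δ_g h_{ij} = Σ_a D2 a a i j`, `tr h = Σ_a h a a`,
`tf(h) = h − (1/3)(tr h) g`, `(∇² tr h)_{ij} = Σ_a D2 i j a a`,
`(δ_Y h)_j = Σ_a D1 a a j` and `K_g` is the conformal Killing operator. -/
theorem statement6 (κ : ℝ) (h : Fin 3 → Fin 3 → ℝ)
    (D1 : Fin 3 → Fin 3 → Fin 3 → ℝ)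
    (D2 : Fin 3 → Fin 3 → Fin 3 → Fin 3 → ℝ)
    (hsym : ∀ i j, h i j = h j i)
    (hD1sym : ∀ k l j, D1 k l j = D1 k j l)
    (hD2sym : ∀ a k l j, D2 a k l j = D2 a k j l)
    (hcomm : ∀ a b c d, D2 a b c d - D2 b a c d
      = -κ * (kd b c * h a d - kd a c * h b d + kd b d * h c a - kd a d * h c b)) :
    ∀ i j,
      dslash (fun a b c => dslashD D2 a b c) i j
        = -4 * ((∑ a, D2 a a i j) - (1/3) * (∑ a, ∑ b, D2 a a b b) * kd i j)
          - 2 * ((∑ a, D2 i j a a) - (1/3) * (∑ c, ∑ a, D2 c c a a) * kd i j)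
          + 3 * ((∑ a, D2 i a a j) + (∑ a, D2 j a a i)
              - (2/3) * (∑ k, ∑ a, D2 k a a k) * kd i j)
          + 12 * κ * (h i j - (1/3) * (∑ a, h a a) * kd i j) :=
  statement6_general κ h D2 hsym hD2sym hcomm
end

section
/- Let (Y,g) be an oriented Riemannian 3-manifold of constant sectional curvature κ. Then đ commutes with the rough Laplacian on symmetric 2-tensors: đ(Δ_g h) = Δ_g(đ h) for every smooth symmetric 2-tensor h. -/
open scoped BigOperators
open MeasureTheory

/-- Components `∇_a ∇_b (đh)_{ij}` of the second covariant derivative of `đh`,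
given the third covariant derivative components
`D3 a b k l j = ∇_a ∇_b ∇ₖ h_{lj}` of `h`. -/
noncomputable def dslashD2 (D3 : Fin 3 → Fin 3 → Fin 3 → Fin 3 → Fin 3 → ℝ) (a b i j : Fin 3) : ℝ :=
  (1/2) * ((∑ k, ∑ l, eps i k l * (D3 a b k l j - D3 a b l k j))
    + (∑ k, ∑ l, eps j k l * (D3 a b k l i - D3 a b l k i)))

/-!
Differentiating `Δh` and commuting `∇ₖ` past `∇ₐ∇ₐ` costs, by the Ricci identities of a space
form, only terms `κ · ∇h`. Since `đ` sees only the part of a 3-tensor antisymmetric in its first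
two slots, the terms symmetric in `(k, l)` drop out, and the single remaining one, `δₖⱼ Xₗ`,
is annihilated by the symmetrization in `(i, j)` because `ε` is antisymmetric.
-/

@[simp]
lemma kd_self (a : Fin 3) : kd a a = 1 := if_pos rfl

lemma kd_comm_s7 (a b : Fin 3) : kd a b = kd b a := by
  simp only [kd, eq_comm]

@[simp]
lemma sum_kd_mul (b : Fin 3) (f : Fin 3 → ℝ) : ∑ a, kd a b * f a = f b := by
  simp [kd]

@[simp]
lemma sum_kd_mul' (b : Fin 3) (f : Fin 3 → ℝ) : ∑ a, kd b a * f a = f b := by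
  simp [kd]

lemma dslash_add (D E : Fin 3 → Fin 3 → Fin 3 → ℝ) (i j : Fin 3) :
    dslash (fun k l j => D k l j + E k l j) i j = dslash D i j + dslash E i j := by
  simp only [dslash, Fin.sum_univ_three]
  ring

lemma dslash_eq_zero_of_symm (S : Fin 3 → Fin 3 → Fin 3 → ℝ) (hS : ∀ k l j, S k l j = S l k j)
    (i j : Fin 3) : dslash S i j = 0 := by
  simp [dslash, hS]

lemma dslash_kd_mul_eq_zero (X : Fin 3 → ℝ) (i j : Fin 3) :
    dslash (fun k l j => kd k j * X l) i j = 0 := by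
  fin_cases i <;> fin_cases j <;> simp [dslash, kd, eps, Fin.sum_univ_three]

lemma sum_dslashD2 (D3 : Fin 3 → Fin 3 → Fin 3 → Fin 3 → Fin 3 → ℝ) (i j : Fin 3) :
    ∑ a, dslashD2 D3 a a i j = dslash (fun k l j => ∑ a, D3 a a k l j) i j := by
  simp only [dslashD2, dslash, Fin.sum_univ_three]
  ring

lemma sum_D3_sub_sum_D3 (κ : ℝ) (D1 : Fin 3 → Fin 3 → Fin 3 → ℝ)
    (D3 : Fin 3 → Fin 3 → Fin 3 → Fin 3 → Fin 3 → ℝ)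
    (hcomm12 : ∀ a b c d e, D3 a b c d e - D3 b a c d e
      = -κ * (kd b c * D1 a d e - kd a c * D1 b d e
          + kd b d * D1 c a e - kd a d * D1 c b e
          + kd b e * D1 c d a - kd a e * D1 c d b))
    (hcomm23 : ∀ a b c d e, D3 a b c d e - D3 a c b d e
      = -κ * (kd c d * D1 a b e - kd b d * D1 a c e
          + kd c e * D1 a d b - kd b e * D1 a d c))
    (k l j : Fin 3) :
    ∑ a, D3 k a a l j - ∑ a, D3 a a k l j
      = -2 * κ * (D1 k l j + D1 l k j + D1 j l k - kd k l * ∑ a, D1 a a j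
          - kd k j * ∑ a, D1 a l a) := by
  have split : ∀ a, D3 k a a l j - D3 a a k l j
      = (D3 k a a l j - D3 a k a l j) + (D3 a k a l j - D3 a a k l j) := fun a => by ring
  rw [← Finset.sum_sub_distrib, Finset.sum_congr rfl fun a _ => split a]
  simp only [hcomm12, hcomm23]
  simp only [kd_self, one_mul, mul_sub, mul_add, neg_mul, sub_neg_eq_add, Finset.sum_add_distrib,
    Finset.sum_neg_distrib, Finset.sum_const, Finset.card_univ, Fintype.card_fin, nsmul_eq_mul,
    Nat.cast_ofNat, ← Finset.mul_sum, sum_kd_mul', sum_kd_mul]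
  ring

/-- Components at a point in an oriented orthonormal frame: `D1` and `D3` are `∇h` and `∇∇∇h`,
`hcomm12` and `hcomm23` are the Ricci identities for constant sectional curvature `κ`. -/
theorem statement7_general (κ : ℝ)
    (D1 : Fin 3 → Fin 3 → Fin 3 → ℝ)
    (D3 : Fin 3 → Fin 3 → Fin 3 → Fin 3 → Fin 3 → ℝ)
    (hD1sym : ∀ k l j, D1 k l j = D1 k j l)
    (hcomm12 : ∀ a b c d e, D3 a b c d e - D3 b a c d e
      = -κ * (kd b c * D1 a d e - kd a c * D1 b d e
          + kd b d * D1 c a e - kd a d * D1 c b e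
          + kd b e * D1 c d a - kd a e * D1 c d b))
    (hcomm23 : ∀ a b c d e, D3 a b c d e - D3 a c b d e
      = -κ * (kd c d * D1 a b e - kd b d * D1 a c e
          + kd c e * D1 a d b - kd b e * D1 a d c)) :
    ∀ i j,
      dslash (fun k l j => ∑ a, D3 k a a l j) i j
        = ∑ a, dslashD2 D3 a a i j := by
  intro i j
  set S : Fin 3 → Fin 3 → Fin 3 → ℝ := fun k l j =>
    -2 * κ * (D1 k l j + D1 l k j + D1 j l k - kd k l * ∑ a, D1 a a j)
  have hS : ∀ k l j, S k l j = S l k j := fun k l j => by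
    simp only [S, hD1sym j l k, kd_comm_s7 k l]
    ring
  have ricci : (fun k l j => ∑ a, D3 k a a l j)
      = fun k l j => (∑ a, D3 a a k l j + S k l j) + kd k j * (2 * κ * ∑ a, D1 a l a) := by
    funext k l j
    linear_combination sum_D3_sub_sum_D3 κ D1 D3 hcomm12 hcomm23 k l j
  rw [ricci, dslash_add, dslash_add, dslash_eq_zero_of_symm S hS, dslash_kd_mul_eq_zero,
    sum_dslashD2, add_zero, add_zero]

/-- on an oriented 3-manifold of constant sectional curvature κ,
`đ` commutes with the rough Laplacian on symmetric 2-tensors: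
`đ(Δ_g h) = Δ_g(đ h)`.  Components at a point in an oriented orthonormal
frame: `h`, `D1 k l j = ∇ₖ h_{lj}`, `D2`, `D3` the higher covariant
derivatives, with the constant-curvature commutation rules. -/
theorem statement7 (κ : ℝ) (h : Fin 3 → Fin 3 → ℝ)
    (D1 : Fin 3 → Fin 3 → Fin 3 → ℝ)
    (D2 : Fin 3 → Fin 3 → Fin 3 → Fin 3 → ℝ)
    (D3 : Fin 3 → Fin 3 → Fin 3 → Fin 3 → Fin 3 → ℝ)
    (hsym : ∀ i j, h i j = h j i)
    (hD1sym : ∀ k l j, D1 k l j = D1 k j l)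
    (hD2sym : ∀ a k l j, D2 a k l j = D2 a k j l)
    (hD3sym : ∀ a b k l j, D3 a b k l j = D3 a b k j l)
    (hcomm2 : ∀ a b c d, D2 a b c d - D2 b a c d
      = -κ * (kd b c * h a d - kd a c * h b d + kd b d * h c a - kd a d * h c b))
    (hcomm12 : ∀ a b c d e, D3 a b c d e - D3 b a c d e
      = -κ * (kd b c * D1 a d e - kd a c * D1 b d e
          + kd b d * D1 c a e - kd a d * D1 c b e
          + kd b e * D1 c d a - kd a e * D1 c d b))
    (hcomm23 : ∀ a b c d e, D3 a b c d e - D3 a c b d e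
      = -κ * (kd c d * D1 a b e - kd b d * D1 a c e
          + kd c e * D1 a d b - kd b e * D1 a d c)) :
    ∀ i j,
      dslash (fun k l j => ∑ a, D3 k a a l j) i j
        = ∑ a, dslashD2 D3 a a i j :=
  statement7_general κ D1 D3 hD1sym hcomm12 hcomm23
end

section
/- For κ = 1 and μ = j(j+2) with integer j ≥ 2, the complex numbers α_j^± = sqrt( j(j+2) − 2 ± (2/3)·i·sqrt(3(j−1)(j+3)) ) satisfy |Re(α_j^±)| > √6. -/
/-!
If `w² = z` then `Re(w)² − Im(w)² = Re z` and `Re(w)² + Im(w)² = ‖z‖`, so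
`Re(w)² = (Re z + ‖z‖)/2`. When `Im z ≠ 0` we have `Re z < ‖z‖`, hence `Re(w)² > Re z`;
for `z = j(j+2) − 2 ± (2/3)i√(3(j−1)(j+3))` and `j ≥ 2` this gives `Re(w)² > 6`.
-/

namespace Complex

lemma re_sq_eq_sq_re_add_norm_sq_div_two (w : ℂ) :
    w.re ^ 2 = ((w ^ 2).re + ‖w ^ 2‖) / 2 := by
  rw [norm_pow, Complex.sq_norm, normSq_apply, sq w, mul_re]
  ring

lemma re_lt_re_cpow_one_half_sq {z : ℂ} (hz : z.im ≠ 0) :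
    z.re < (z ^ (1 / 2 : ℂ)).re ^ 2 := by
  have hsq : (z ^ (1 / 2 : ℂ)) ^ 2 = z := by
    simpa only [one_div] using cpow_ofNat_inv_pow z 2
  have hre : z.re < ‖z‖ := (le_abs_self z.re).trans_lt (abs_re_lt_norm.mpr hz)
  rw [re_sq_eq_sq_re_add_norm_sq_div_two, hsq]
  linarith

lemma sqrt_lt_abs_re_cpow_one_half {x : ℝ} {z : ℂ} (hx0 : 0 ≤ x) (hx : x ≤ z.re)
    (hz : z.im ≠ 0) : Real.sqrt x < |(z ^ (1 / 2 : ℂ)).re| := by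
  rw [← Real.sqrt_sq_eq_abs]
  exact Real.sqrt_lt_sqrt hx0 (hx.trans_lt (re_lt_re_cpow_one_half_sq hz))

end Complex

/-- for κ = 1 and μ = j(j+2) with integer j ≥ 2, the complex
numbers `α_j^± = sqrt( j(j+2) − 2 ± (2/3)·i·sqrt(3(j−1)(j+3)) )` (principal
square root) satisfy `|Re(α_j^±)| > √6`. -/
theorem statement17 (j : ℤ) (hj : 2 ≤ j) :
    Real.sqrt 6 <
      |((((j : ℂ) * ((j : ℂ) + 2) - 2)
          + (2/3) * Complex.I * (Real.sqrt (3 * ((j : ℝ) - 1) * ((j : ℝ) + 3)) : ℝ))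
          ^ ((1 : ℂ)/2)).re|
    ∧ Real.sqrt 6 <
      |((((j : ℂ) * ((j : ℂ) + 2) - 2)
          - (2/3) * Complex.I * (Real.sqrt (3 * ((j : ℝ) - 1) * ((j : ℝ) + 3)) : ℝ))
          ^ ((1 : ℂ)/2)).re| := by
  have hjr : (2 : ℝ) ≤ j := by exact_mod_cast hj
  have hre : (6 : ℝ) ≤ j * (j + 2) - 2 := by nlinarith
  have hs : 0 < Real.sqrt (3 * ((j : ℝ) - 1) * ((j : ℝ) + 3)) :=
    Real.sqrt_pos.mpr (by nlinarith)
  exact ⟨Complex.sqrt_lt_abs_re_cpow_one_half (by norm_num) (by simpa using hre)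
      (by simpa using hs.ne'),
    Complex.sqrt_lt_abs_re_cpow_one_half (by norm_num) (by simpa using hre)
      (by simpa using hs.ne')⟩
end

section
/- Let g = dt² + g_{S³} be the product metric on ℝ×S³ with g_{S³} the round metric of curvature 1, and let φ be an eigenfunction of the Laplacian on S³ with Δφ = 3φ (lowest nonconstant eigenvalue). Then for any constants C₃, C₄, the tensor h = p(t)φ(3dt⊗dt − g_{S³}) + q(t)(dt⊙dφ), with p(t) = C₃e^t − C₄e^{−t} and q(t) = C₃e^t + C₄e^{−t}, equals K_g(ω̃) for the 1-form ω̃ = (1/2)(C₃(t+3)e^t − C₄(t−3)e^{−t})φ dt + (1/2)(−C₃ t e^t − C₄ t e^{−t}) dφ, where K_g is the conformal Killing operator of g on the 4-manifold ℝ×S³ and dt⊙dφ = dt⊗dφ + dφ⊗dt. -/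
open scoped BigOperators
open MeasureTheory

section

open Real

theorem hasDerivAt_linear_mul_exp_add_linear_mul_exp_neg (a b c d t : ℝ) :
    HasDerivAt (fun s => (a * s + b) * exp s + (c * s + d) * exp (-s))
      ((a * t + a + b) * exp t + (c - c * t - d) * exp (-t)) t := by
  have hexp_neg : HasDerivAt (fun s => exp (-s)) (-exp (-t)) t := by
    simpa using (hasDerivAt_neg t).exp
  exact (((((hasDerivAt_id' t).const_mul a).add_const b).mul (hasDerivAt_exp t)).add
    ((((hasDerivAt_id' t).const_mul c).add_const d).mul hexp_neg)).congr_deriv (by ring)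

theorem deriv_dt_coefficient (C3 C4 t : ℝ) :
    deriv (fun s => (1/2) * (C3 * (s + 3) * exp s - C4 * (s - 3) * exp (-s))) t
      = (1/2) * (C3 * (t + 4) * exp t - C4 * (4 - t) * exp (-t)) := by
  have h := hasDerivAt_linear_mul_exp_add_linear_mul_exp_neg
    (C3 / 2) (3 * C3 / 2) (-C4 / 2) (3 * C4 / 2) t
  rw [show (fun s => (1/2) * (C3 * (s + 3) * exp s - C4 * (s - 3) * exp (-s)))
      = fun s => (C3 / 2 * s + 3 * C3 / 2) * exp s + (-C4 / 2 * s + 3 * C4 / 2) * exp (-s)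
      from funext fun s => by ring, h.deriv]
  ring

theorem deriv_dφ_coefficient (C3 C4 t : ℝ) :
    deriv (fun s => (1/2) * (-C3 * s * exp s - C4 * s * exp (-s))) t
      = (1/2) * (-C3 * (1 + t) * exp t - C4 * (1 - t) * exp (-t)) := by
  have h := hasDerivAt_linear_mul_exp_add_linear_mul_exp_neg (-C3 / 2) 0 (-C4 / 2) 0 t
  rw [show (fun s => (1/2) * (-C3 * s * exp s - C4 * s * exp (-s)))
      = fun s => (-C3 / 2 * s + 0) * exp s + (-C4 / 2 * s + 0) * exp (-s)
      from funext fun s => by ring, h.deriv]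
  ring

end

/-- on the cylinder ℝ×S³ with product metric `g = dt² + g_{S³}`,
for a lowest nonconstant eigenfunction φ (`Δ_{S³}φ = 3φ`, with Obata's
equation `∇²φ = −φ g_{S³}`), the tensor
`h = p(t)φ(3dt⊗dt − g_{S³}) + q(t)(dt⊙dφ)`, with `p = C₃eᵗ − C₄e⁻ᵗ` and
`q = C₃eᵗ + C₄e⁻ᵗ`, equals `K_g(ω̃)` for
`ω̃ = (1/2)(C₃(t+3)eᵗ − C₄(t−3)e⁻ᵗ)φ dt + (1/2)(−C₃teᵗ − C₄te⁻ᵗ)dφ`.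
Using the block decomposition of `K_g` on the cylinder
(`K_g(f dt + ω) = ((3/2)ḟ − (1/2)δω)dt⊗dt + (ω̇ + df)⊙dt
 + L_{g_{S³}}(ω) − (1/2)(ḟ + δω)g_{S³}`), with `ω = m(t)dφ`,
`δ(dφ) = Σ_a ∇_a∇_aφ`, `L(dφ)_{ij} = 2∇ᵢ∇ⱼφ`, the claim is the equality of
the three blocks: the dt⊗dt block `3p(t)φ`, the mixed block `q(t)dφ`, and the
spherical block `−p(t)φ g_{S³}`.  Components on S³ in an orthonormal frame:
`φ`, `Dφ y i = ∇ᵢφ`, `D2φ y i j = ∇ᵢ∇ⱼφ = −φ δ_{ij}`. -/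
theorem statement19 {Y : Type*} (C3 C4 : ℝ)
    (φ : Y → ℝ) (Dφ : Y → Fin 3 → ℝ) (D2φ : Y → Fin 3 → Fin 3 → ℝ)
    (hObata : ∀ y i j, D2φ y i j = -(φ y) * kd i j)
    (heig : ∀ y, -(∑ a, D2φ y a a) = 3 * φ y) :
    (∀ t : ℝ, ∀ y : Y,
      (3/2) * deriv (fun s => (1/2) * (C3 * (s + 3) * Real.exp s
          - C4 * (s - 3) * Real.exp (-s))) t * φ y
        - (1/2) * (∑ a, ((1/2) * (-C3 * t * Real.exp t - C4 * t * Real.exp (-t)))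
            * D2φ y a a)
      = 3 * (C3 * Real.exp t - C4 * Real.exp (-t)) * φ y)
    ∧ (∀ t : ℝ, ∀ y : Y, ∀ i : Fin 3,
      deriv (fun s => (1/2) * (-C3 * s * Real.exp s - C4 * s * Real.exp (-s))) t
          * Dφ y i
        + ((1/2) * (C3 * (t + 3) * Real.exp t - C4 * (t - 3) * Real.exp (-t)))
          * Dφ y i
      = (C3 * Real.exp t + C4 * Real.exp (-t)) * Dφ y i)
    ∧ (∀ t : ℝ, ∀ y : Y, ∀ i j : Fin 3,
      2 * ((1/2) * (-C3 * t * Real.exp t - C4 * t * Real.exp (-t))) * D2φ y i j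
        - (1/2) * (deriv (fun s => (1/2) * (C3 * (s + 3) * Real.exp s
              - C4 * (s - 3) * Real.exp (-s))) t * φ y
            + (∑ a, ((1/2) * (-C3 * t * Real.exp t - C4 * t * Real.exp (-t)))
                * D2φ y a a)) * kd i j
      = -(C3 * Real.exp t - C4 * Real.exp (-t)) * (φ y) * kd i j) := by
  have htrace : ∀ y, ∑ a, D2φ y a a = -3 * φ y := fun y => by linarith [heig y]
  refine ⟨fun t y => ?_, fun t y i => ?_, fun t y i j => ?_⟩
  · rw [deriv_dt_coefficient, ← Finset.mul_sum, htrace]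
    ring
  · rw [deriv_dφ_coefficient]
    ring
  · rw [deriv_dt_coefficient, ← Finset.mul_sum, htrace, hObata]
    ring
end
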